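/- arXiv:1102.2817 — 3 statements merged into one kernel-verified Lean document; each statement's English description precedes it below -/
import Mathlib

section
/- Let k ≥ 1 be an integer, let 0 < p < 1, q = 1 - p, c > 0. Then for every u > 0, Σ_{n ≥ k, n ≡ k (mod 2)} (c^n u^{n-1} e^{-cu} / (n-1)!) · (k/n) · C(n, (n+k)/2) · q^{(n+k)/2} p^{(n-k)/2} = e^{-cu} (k/u) (q/p)^{k/2} I_k(2 c u √(pq)), where C(n, m) denotes the binomial coefficient. -/
/-!
Only the terms with `n = k + 2ℓ` survive, and for these the binomial coefficient cancels
against the factorials: `(k/n) C(n, k+ℓ) / (n-1)! = k / ((k+ℓ)! ℓ!)`. Splitting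
`q^(k+ℓ) = (q/p)^(k/2) √(pq)^k q^ℓ` turns the `ℓ`-th term into `e^{-cu} (k/u) (q/p)^(k/2)` times
the `ℓ`-th term of the Bessel series at `2cu√(pq)`.
-/

/-- The modified Bessel function of the first kind of integer order `k`:
`I_k(x) = ∑_{ℓ=0}^∞ (1/((ℓ+k)! ℓ!)) (x/2)^(2ℓ+k)`. -/
noncomputable def besselI (k : ℕ) (x : ℝ) : ℝ :=
  ∑' ℓ : ℕ, (1 / ((Nat.factorial (ℓ + k) : ℝ) * Nat.factorial ℓ)) * (x / 2) ^ (2 * ℓ + k)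

open Real Nat

theorem tsum_ite_le_and_mod_two_eq {α : Type*} [AddCommMonoid α] [TopologicalSpace α]
    (k : ℕ) (f : ℕ → α) :
    ∑' n, (if k ≤ n ∧ n % 2 = k % 2 then f n else 0) = ∑' ℓ, f (k + 2 * ℓ) := by
  have hinj : Function.Injective (fun ℓ ↦ k + 2 * ℓ) := fun a b h ↦ by simp only at h; omega
  have hsupp : Function.support (fun n ↦ if k ≤ n ∧ n % 2 = k % 2 then f n else 0) ⊆
      Set.range (fun ℓ ↦ k + 2 * ℓ) := fun n hn ↦
    ⟨(n - k) / 2, by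
      have := Function.mem_support.1 hn
      split_ifs at this with h
      · dsimp only; omega
      · exact absurd rfl this⟩
  rw [← hinj.tsum_eq hsupp]
  exact tsum_congr fun ℓ ↦ if_pos ⟨by omega, by omega⟩

theorem rpow_div_two_mul_sqrt_mul_pow {p q : ℝ} (hp : 0 < p) (hq : 0 ≤ q) (k : ℕ) :
    (q / p) ^ ((k : ℝ) / 2) * √(p * q) ^ k = q ^ k := by
  have hpq : 0 ≤ p * q := by positivity
  rw [sqrt_eq_rpow, ← rpow_natCast, ← rpow_mul hpq, one_div_mul_eq_div,
    ← mul_rpow (by positivity) hpq, show q / p * (p * q) = q ^ 2 by field_simp,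
    ← rpow_natCast, ← rpow_mul hq, Nat.cast_ofNat, mul_div_cancel₀ _ two_ne_zero, rpow_natCast]

theorem hitting_term_add_two_mul {p q : ℝ} (hp : 0 < p) (hq : 0 ≤ q) (c : ℝ) {u : ℝ}
    (hu : u ≠ 0) (k ℓ : ℕ) :
    (c ^ (k + 2 * ℓ) * u ^ (k + 2 * ℓ - 1) * exp (-c * u) / (k + 2 * ℓ - 1)!) *
        ((k : ℝ) / (k + 2 * ℓ : ℕ)) * ((k + 2 * ℓ).choose ((k + 2 * ℓ + k) / 2)) *
        q ^ ((k + 2 * ℓ + k) / 2) * p ^ ((k + 2 * ℓ - k) / 2) =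
      exp (-c * u) * (k / u) * (q / p) ^ ((k : ℝ) / 2) *
        (1 / ((ℓ + k)! * ℓ ! : ℝ) * (2 * c * u * √(p * q) / 2) ^ (2 * ℓ + k)) := by
  rcases k.eq_zero_or_pos with rfl | hk
  · simp
  rw [show (k + 2 * ℓ + k) / 2 = k + ℓ by omega, show (k + 2 * ℓ - k) / 2 = ℓ by omega,
    show 2 * c * u * √(p * q) / 2 = c * u * √(p * q) by ring]
  have hchoose : ((k + 2 * ℓ).choose (k + ℓ) : ℝ) = (k + 2 * ℓ)! / ((ℓ + k)! * ℓ !) := by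
    rw [cast_choose ℝ (by omega), show k + 2 * ℓ - (k + ℓ) = ℓ by omega, add_comm ℓ k]
  have hfact : ((k + 2 * ℓ)! : ℝ) = (k + 2 * ℓ : ℕ) * (k + 2 * ℓ - 1)! := by
    exact_mod_cast (mul_factorial_pred (show k + 2 * ℓ ≠ 0 by omega)).symm
  have hupow : u ^ (k + 2 * ℓ) = u ^ (k + 2 * ℓ - 1) * u := by
    rw [← pow_succ, Nat.sub_add_cancel (by omega)]
  have hqpow : q ^ (k + ℓ) = (q / p) ^ ((k : ℝ) / 2) * √(p * q) ^ k * q ^ ℓ := by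
    rw [rpow_div_two_mul_sqrt_mul_pow hp hq, pow_add]
  have hsqrt : √(p * q) ^ (2 * ℓ + k) = p ^ ℓ * q ^ ℓ * √(p * q) ^ k := by
    rw [pow_add, pow_mul, sq_sqrt (by positivity), mul_pow]
  rw [hchoose, hfact, hqpow, mul_pow, mul_pow, hsqrt, add_comm (2 * ℓ) k, hupow]
  have : ((k + 2 * ℓ : ℕ) : ℝ) ≠ 0 := by positivity
  field_simp

theorem sum_hitting_time_density_eq_besselI_general
    (k : ℕ) (p q c : ℝ) (hp0 : 0 < p) (hp1 : p < 1) (hq : q = 1 - p)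
    (u : ℝ) (hu : 0 < u) :
    ∑' n : ℕ,
      (if k ≤ n ∧ n % 2 = k % 2 then
        (c ^ n * u ^ (n - 1) * Real.exp (-c * u) / (Nat.factorial (n - 1) : ℝ)) *
          ((k : ℝ) / n) * (n.choose ((n + k) / 2)) *
          q ^ ((n + k) / 2) * p ^ ((n - k) / 2)
      else 0) =
      Real.exp (-c * u) * ((k : ℝ) / u) * (q / p) ^ ((k : ℝ) / 2) *
        besselI k (2 * c * u * Real.sqrt (p * q)) := by
  have hq0 : 0 ≤ q := by linarith
  rw [tsum_ite_le_and_mod_two_eq, besselI, ← tsum_mul_left]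
  exact tsum_congr (hitting_term_add_two_mul hp0 hq0 c hu.ne' k)

/-- For an integer `k ≥ 1`, reals `0 < p < 1`, `q = 1 - p`, `c > 0` and
`u > 0`, one has
`∑_{n ≥ k, n ≡ k (mod 2)} (c^n u^(n-1) e^{-cu}/(n-1)!) (k/n) C(n,(n+k)/2) q^((n+k)/2) p^((n-k)/2)`
`= e^{-cu} (k/u) (q/p)^(k/2) I_k(2 c u √(pq))`. -/
theorem sum_hitting_time_density_eq_besselI
    (k : ℕ) (hk : 1 ≤ k) (p q c : ℝ) (hp0 : 0 < p) (hp1 : p < 1) (hq : q = 1 - p)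
    (hc : 0 < c) (u : ℝ) (hu : 0 < u) :
    ∑' n : ℕ,
      (if k ≤ n ∧ n % 2 = k % 2 then
        (c ^ n * u ^ (n - 1) * Real.exp (-c * u) / (Nat.factorial (n - 1) : ℝ)) *
          ((k : ℝ) / n) * (n.choose ((n + k) / 2)) *
          q ^ ((n + k) / 2) * p ^ ((n - k) / 2)
      else 0) =
      Real.exp (-c * u) * ((k : ℝ) / u) * (q / p) ^ ((k : ℝ) / 2) *
        besselI k (2 * c * u * Real.sqrt (p * q)) :=
  sum_hitting_time_density_eq_besselI_general k p q c hp0 hp1 hq u hu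
end

section
/- Let k ≥ 1 be an integer and let 0 < p < 1, q = 1 - p. Let (ξ_i)_{i≥1} be i.i.d. random variables with P(ξ_i = 1) = p and P(ξ_i = -1) = q, let S_n = k + ξ_1 + … + ξ_n, and let H = inf{n ≥ 0 : S_n = 0}. Then for every integer n ≥ 1, P(H = n) = (k/n) · C(n, (n+k)/2) · q^{(n+k)/2} p^{(n-k)/2} if n ≥ k and n + k is even, and P(H = n) = 0 otherwise, where C(n, m) denotes the binomial coefficient. -/
/-!
Almost surely every step is `±1`, so up to a null set `{H = n}` is the disjoint union of
the cylinders `{ξ i = ε i for i < n}` over the sign patterns `ε` whose walk from `k` first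
reaches `0` at time `n`. By independence each cylinder has probability `∏ (p or q)`, and
splitting off the first step shows that the total weight of these patterns obeys the
first-step recursion `f (n + 1) k = p f n (k + 1) + q f n (k - 1)` for `k ≠ 0`. The closed
form obeys the same recursion, by Pascal's rule and `(m + 1) C(n, m + 1) = (n - m) C(n, m)`.
-/

open Finset MeasureTheory ProbabilityTheory

def Bool.toStep (b : Bool) : ℤ := if b then 1 else -1

lemma Bool.toStep_injective : Function.Injective Bool.toStep := by decide

def increments {n : ℕ} (ε : Fin n → Bool) (i : ℕ) : ℤ :=
  if h : i < n then (ε ⟨i, h⟩).toStep else 0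

@[simp] lemma increments_cons_zero {n : ℕ} (b : Bool) (ε : Fin n → Bool) :
    increments (Fin.cons b ε : Fin (n + 1) → Bool) 0 = b.toStep := by
  simp [increments]

@[simp] lemma increments_cons_succ {n : ℕ} (b : Bool) (ε : Fin n → Bool) (i : ℕ) :
    increments (Fin.cons b ε : Fin (n + 1) → Bool) (i + 1) = increments ε i := by
  by_cases hi : i < n
  · simp [increments, hi, ← Fin.succ_mk]
  · simp [increments, hi]

def IsFirstPassage (k : ℤ) (n : ℕ) (x : ℕ → ℤ) : Prop :=
  (∀ m < n, k + ∑ i ∈ range m, x i ≠ 0) ∧ k + ∑ i ∈ range n, x i = 0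

lemma isFirstPassage_zero {k : ℤ} {x : ℕ → ℤ} : IsFirstPassage k 0 x ↔ k = 0 := by
  simp [IsFirstPassage]

lemma isFirstPassage_succ {k : ℤ} {n : ℕ} {x : ℕ → ℤ} :
    IsFirstPassage k (n + 1) x ↔ k ≠ 0 ∧ IsFirstPassage (k + x 0) n fun i => x (i + 1) := by
  have hshift (m : ℕ) :
      k + ∑ i ∈ range (m + 1), x i = k + x 0 + ∑ i ∈ range m, x (i + 1) := by
    rw [sum_range_succ']
    ring
  simp only [IsFirstPassage, Nat.forall_lt_succ_left, hshift, range_zero, sum_empty, add_zero,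
    and_assoc]

lemma isFirstPassage_congr {k : ℤ} {n : ℕ} {x y : ℕ → ℤ} (hxy : ∀ i < n, x i = y i) :
    IsFirstPassage k n x ↔ IsFirstPassage k n y := by
  have hsum {m : ℕ} (hm : m ≤ n) : ∑ i ∈ range m, x i = ∑ i ∈ range m, y i :=
    sum_congr rfl fun i hi => hxy i (by rw [mem_range] at hi; omega)
  simp only [IsFirstPassage, hsum le_rfl]
  exact and_congr_left' (forall₂_congr fun m hm => by rw [hsum hm.le])

noncomputable def pathWeight (p q : ℝ) {n : ℕ} (ε : Fin n → Bool) : ℝ :=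
  ∏ i, if ε i then p else q

lemma pathWeight_cons (p q : ℝ) {n : ℕ} (b : Bool) (ε : Fin n → Bool) :
    pathWeight p q (Fin.cons b ε : Fin (n + 1) → Bool) =
      (if b then p else q) * pathWeight p q ε := by
  simp [pathWeight, Fin.prod_univ_succ]

lemma pathWeight_nonneg {p q : ℝ} (hp : 0 ≤ p) (hq : 0 ≤ q) {n : ℕ} (ε : Fin n → Bool) :
    0 ≤ pathWeight p q ε :=
  prod_nonneg fun i _ => by split_ifs <;> assumption

lemma Fintype.sum_fun_fin_succ {α M : Type*} [Fintype α] [AddCommMonoid M] {n : ℕ}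
    (f : (Fin (n + 1) → α) → M) :
    ∑ ε, f ε = ∑ a, ∑ ε : Fin n → α, f (Fin.cons a ε) := by
  rw [← (Fin.consEquiv fun _ => α).sum_comp, Fintype.sum_prod_type]
  rfl

noncomputable def firstPassageProb (p q : ℝ) : ℕ → ℤ → ℝ
  | 0, k => if k = 0 then 1 else 0
  | n + 1, k =>
    if k = 0 then 0 else p * firstPassageProb p q n (k + 1) + q * firstPassageProb p q n (k - 1)

open Classical in
theorem sum_pathWeight_isFirstPassage (p q : ℝ) (n : ℕ) (k : ℤ) :
    ∑ ε : Fin n → Bool with IsFirstPassage k n (increments ε), pathWeight p q ε =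
      firstPassageProb p q n k := by
  induction n generalizing k with
  | zero => by_cases hk : k = 0 <;> simp [hk, isFirstPassage_zero, firstPassageProb, pathWeight]
  | succ n ih =>
    have hcons (b : Bool) (ε : Fin n → Bool) :
        IsFirstPassage k (n + 1) (increments (Fin.cons b ε)) ↔
          k ≠ 0 ∧ IsFirstPassage (k + b.toStep) n (increments ε) := by
      simp [isFirstPassage_succ]
    rw [sum_filter, Fintype.sum_fun_fin_succ, Fintype.sum_bool]
    simp only [hcons, pathWeight_cons]
    rcases eq_or_ne k 0 with rfl | hk
    · simp [firstPassageProb]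
    · simp only [firstPassageProb, if_neg hk, ← ih, sum_filter, mul_sum, mul_ite, mul_zero]
      simp [hk, Bool.toStep, sub_eq_add_neg]

lemma choose_ballot_recursion {n k m : ℕ} (hn : 1 ≤ n) (hkn : k ≤ n + 1)
    (hm : n + 1 + k = 2 * (m + 1)) :
    (k : ℝ) / (n + 1) * (n + 1).choose (m + 1) =
      (k + 1 : ℝ) / n * n.choose (m + 1) + (k - 1 : ℝ) / n * n.choose m := by
  have hratio : (n.choose (m + 1) : ℝ) * (m + 1) = n.choose m * (n - m) := by
    rw [← Nat.cast_sub (by omega)]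
    exact_mod_cast Nat.choose_succ_right_eq n m
  have hm' : (n + 1 + k : ℝ) = 2 * (m + 1) := by exact_mod_cast hm
  rw [Nat.choose_succ_succ' n m]
  field_simp
  push_cast
  linear_combination (-2 : ℝ) * hratio + (-(n.choose m + n.choose (m + 1) : ℝ)) * hm'

noncomputable def firstPassageFormula (p q : ℝ) (n k : ℕ) : ℝ :=
  if k ≤ n ∧ Even (n + k) then
    (k : ℝ) / n * n.choose ((n + k) / 2) * q ^ ((n + k) / 2) * p ^ ((n - k) / 2)
  else 0

lemma firstPassageFormula_succ (p q : ℝ) {n k : ℕ} (hn : 1 ≤ n) (hk : 1 ≤ k) :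
    firstPassageFormula p q (n + 1) k =
      p * firstPassageFormula p q n (k + 1) + q * firstPassageFormula p q n (k - 1) := by
  by_cases h : k ≤ n + 1 ∧ Even (n + 1 + k)
  · -- `m + 1` down-steps and `b` up-steps
    obtain ⟨m, b, hm, hb⟩ : ∃ m b, n + 1 + k = 2 * (m + 1) ∧ n + 1 = m + 1 + b := by
      obtain ⟨r, hr⟩ := h.2
      exact ⟨r - 1, n + 1 - r, by omega, by omega⟩
    have hup : p * firstPassageFormula p q n (k + 1) =
        (k + 1 : ℝ) / n * n.choose (m + 1) * q ^ (m + 1) * p ^ b := by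
      rcases b with _ | b
      · have hcond : ¬(k + 1 ≤ n ∧ Even (n + (k + 1))) := fun h' => by omega
        rw [firstPassageFormula, if_neg hcond, Nat.choose_eq_zero_of_lt (by omega)]
        simp
      · have hcond : k + 1 ≤ n ∧ Even (n + (k + 1)) := ⟨by omega, ⟨m + 1, by omega⟩⟩
        rw [firstPassageFormula, if_pos hcond, show (n + (k + 1)) / 2 = m + 1 by omega,
          show (n - (k + 1)) / 2 = b by omega]
        push_cast
        ring
    have hdown : q * firstPassageFormula p q n (k - 1) =
        (k - 1 : ℝ) / n * n.choose m * q ^ (m + 1) * p ^ b := by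
      have hcond : k - 1 ≤ n ∧ Even (n + (k - 1)) := ⟨by omega, ⟨m, by omega⟩⟩
      rw [firstPassageFormula, if_pos hcond, show (n + (k - 1)) / 2 = m by omega,
        show (n - (k - 1)) / 2 = b by omega, Nat.cast_sub hk]
      push_cast
      ring
    rw [hup, hdown, firstPassageFormula, if_pos h, show (n + 1 + k) / 2 = m + 1 by omega,
      show (n + 1 - k) / 2 = b by omega]
    push_cast
    linear_combination (q ^ (m + 1) * p ^ b) * choose_ballot_recursion hn h.1 hm
  · have hup : ¬(k + 1 ≤ n ∧ Even (n + (k + 1))) := by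
      simp only [Nat.even_iff] at h ⊢; omega
    have hdown : ¬(k - 1 ≤ n ∧ Even (n + (k - 1))) := by
      simp only [Nat.even_iff] at h ⊢; omega
    simp only [firstPassageFormula, if_neg h, if_neg hup, if_neg hdown]
    ring

theorem firstPassageProb_natCast (p q : ℝ) {n : ℕ} (hn : 1 ≤ n) (k : ℕ) :
    firstPassageProb p q n k = firstPassageFormula p q n k := by
  induction n, hn using Nat.le_induction generalizing k with
  | base =>
    rcases k with _ | _ | k
    · simp [firstPassageProb, firstPassageFormula]
    · simp [firstPassageProb, firstPassageFormula]
    · have : (k : ℤ) + 1 ≠ 0 := by omega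
      simp [firstPassageProb, firstPassageFormula, this]
      omega
  | succ n hn ih =>
    rcases k with _ | k
    · simp [firstPassageProb, firstPassageFormula]
    · rw [firstPassageFormula_succ p q hn (by omega), Nat.add_sub_cancel, ← ih, ← ih,
        firstPassageProb, if_neg (by omega)]
      push_cast
      rw [add_sub_cancel_right]

section WalkCylinder

variable {Ω : Type*} {ξ : ℕ → Ω → ℤ} {n : ℕ}

def walkCylinder (ξ : ℕ → Ω → ℤ) {n : ℕ} (ε : Fin n → Bool) : Set Ω :=
  {ω | ∀ i : Fin n, ξ i ω = (ε i).toStep}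

lemma mem_walkCylinder_iff {ε : Fin n → Bool} {ω : Ω} :
    ω ∈ walkCylinder ξ ε ↔ ∀ i < n, ξ i ω = increments ε i := by
  simp only [walkCylinder, increments, Set.mem_ofPred_eq, Fin.forall_iff]
  exact forall₂_congr fun i hi => by rw [dif_pos hi]

lemma pairwiseDisjoint_walkCylinder (s : Set (Fin n → Bool)) :
    s.PairwiseDisjoint (walkCylinder ξ) := by
  intro ε _ ε' _ hne
  refine Set.disjoint_left.2 fun ω hω hω' => hne (funext fun i => ?_)
  exact Bool.toStep_injective ((hω i).symm.trans (hω' i))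

variable [MeasurableSpace Ω] {P : Measure Ω}

lemma measurableSet_walkCylinder (hξ : ∀ i, Measurable (ξ i)) (ε : Fin n → Bool) :
    MeasurableSet (walkCylinder ξ ε) := by
  simp only [walkCylinder, Set.ofPred_forall]
  exact MeasurableSet.iInter fun i => hξ i (measurableSet_singleton _)

lemma measure_walkCylinder (hindep : iIndepFun ξ P) (ε : Fin n → Bool) :
    P (walkCylinder ξ ε) = ∏ i : Fin n, P {ω | ξ i ω = (ε i).toStep} := by
  have := (hindep.precomp Fin.val_injective).meas_iInter
    (s := fun i : Fin n => {ω | ξ i ω = (ε i).toStep})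
    fun i => ⟨{(ε i).toStep}, measurableSet_singleton _, rfl⟩
  simpa [walkCylinder, Set.ofPred_forall] using this

lemma ae_eq_one_or_eq_neg_one [IsProbabilityMeasure P] {X : Ω → ℤ} (hX : Measurable X)
    (h : P {ω | X ω = 1} + P {ω | X ω = -1} = 1) : ∀ᵐ ω ∂P, X ω = 1 ∨ X ω = -1 := by
  have hdown : MeasurableSet {ω | X ω = -1} := hX (measurableSet_singleton _)
  have hmeas : MeasurableSet {ω | X ω = 1 ∨ X ω = -1} :=
    (hX (measurableSet_singleton 1)).union hdown
  rw [ae_iff_measure_eq hmeas.nullMeasurableSet, measure_univ, Set.ofPred_or,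
    measure_union _ hdown, h]
  exact Set.disjoint_left.2 fun ω h1 h2 => by simp_all

open Classical in
lemma measure_eq_sum_measure_walkCylinder {Φ : (ℕ → ℤ) → Prop}
    (hΦ : ∀ x y, (∀ i < n, x i = y i) → (Φ x ↔ Φ y)) (hξ : ∀ i, Measurable (ξ i))
    (hsign : ∀ᵐ ω ∂P, ∀ i : Fin n, ξ i ω = 1 ∨ ξ i ω = -1) :
    P {ω | Φ fun i => ξ i ω} =
      ∑ ε : Fin n → Bool with Φ (increments ε), P (walkCylinder ξ ε) := by
  rw [← measure_biUnion_finset (pairwiseDisjoint_walkCylinder _)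
    fun ε _ => measurableSet_walkCylinder hξ ε]
  refine measure_congr (Filter.eventuallyEq_set.2 ?_)
  filter_upwards [hsign] with ω hω
  simp only [Set.mem_iUnion, mem_filter, mem_univ, true_and, exists_prop]
  constructor
  · intro hΦω
    let ε : Fin n → Bool := fun i => ξ i ω = 1
    have hcyl : ω ∈ walkCylinder ξ ε := fun i => by
      rcases hω i with h | h <;> simp [ε, h, Bool.toStep]
    exact ⟨ε, (hΦ _ _ (mem_walkCylinder_iff.1 hcyl)).1 hΦω, hcyl⟩
  · rintro ⟨ε, hΦε, hcyl⟩
    exact (hΦ _ _ (mem_walkCylinder_iff.1 hcyl)).2 hΦε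

end WalkCylinder

lemma iInf_natCast_eq_natCast_iff {P : ℕ → Prop} {n : ℕ} :
    (⨅ (m : ℕ) (_ : P m), (m : ℕ∞)) = n ↔ P n ∧ ∀ m < n, ¬P m := by
  rw [iInf_subtype', ENat.iInf_eq_natCast_iff]
  simp only [Subtype.exists, Subtype.forall, Nat.cast_inj, Nat.cast_le, exists_prop,
    exists_eq_right]
  refine and_congr_right fun _ => forall_congr' fun m => ?_
  rw [← not_lt]
  exact imp_not_comm

theorem hitting_time_distribution_general
    {Ω : Type*} [MeasurableSpace Ω] (P : Measure Ω) [IsProbabilityMeasure P]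
    (k : ℕ) (p q : ℝ) (hp0 : 0 < p) (hp1 : p < 1) (hq : q = 1 - p)
    (ξ : ℕ → Ω → ℤ) (hmeas : ∀ i, Measurable (ξ i))
    (hindep : iIndepFun ξ P)
    (hup : ∀ i, P {ω | ξ i ω = 1} = ENNReal.ofReal p)
    (hdown : ∀ i, P {ω | ξ i ω = -1} = ENNReal.ofReal q)
    (S : ℕ → Ω → ℤ) (hS : ∀ n ω, S n ω = (k : ℤ) + ∑ i ∈ Finset.range n, ξ i ω)
    (H : Ω → ℕ∞) (hH : ∀ ω, H ω = ⨅ (m : ℕ) (_ : S m ω = 0), (m : ℕ∞))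
    (n : ℕ) (hn : 1 ≤ n) :
    P {ω | H ω = (n : ℕ∞)} =
      if k ≤ n ∧ Even (n + k) then
        ENNReal.ofReal (((k : ℝ) / n) * (n.choose ((n + k) / 2)) *
          q ^ ((n + k) / 2) * p ^ ((n - k) / 2))
      else 0 := by
  have hq0 : 0 ≤ q := by linarith
  have hevent : {ω | H ω = n} = {ω | IsFirstPassage k n fun i => ξ i ω} := by
    ext ω
    simp only [Set.mem_ofPred_eq, hH, iInf_natCast_eq_natCast_iff, IsFirstPassage, hS]
    exact and_comm
  have hsign : ∀ᵐ ω ∂P, ∀ i : Fin n, ξ i ω = 1 ∨ ξ i ω = -1 :=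
    ae_all_iff.2 fun i => ae_eq_one_or_eq_neg_one (hmeas i) <| by
      rw [hup, hdown, ← ENNReal.ofReal_add hp0.le hq0, hq, add_sub_cancel,
        ENNReal.ofReal_one]
  have hcyl (ε : Fin n → Bool) :
      P (walkCylinder ξ ε) = ENNReal.ofReal (pathWeight p q ε) := by
    rw [measure_walkCylinder hindep, pathWeight,
      ENNReal.ofReal_prod_of_nonneg fun i _ => by split_ifs <;> linarith]
    refine prod_congr rfl fun i _ => ?_
    cases ε i <;> simp [Bool.toStep, hup, hdown]
  rw [hevent, measure_eq_sum_measure_walkCylinder (fun _ _ => isFirstPassage_congr) hmeas hsign]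
  simp only [hcyl]
  rw [← ENNReal.ofReal_sum_of_nonneg fun ε _ => pathWeight_nonneg hp0.le hq0 ε,
    sum_pathWeight_isFirstPassage, firstPassageProb_natCast p q hn, firstPassageFormula]
  split_ifs <;> simp

/-- For a simple random walk started at `k ≥ 1` which moves up by `1`
with probability `p` and down by `1` with probability `q = 1 - p`, the first hitting time
`H` of `0` satisfies `P(H = n) = (k/n) C(n, (n+k)/2) q^((n+k)/2) p^((n-k)/2)` if `n ≥ k`
and `n + k` is even, and `P(H = n) = 0` otherwise. -/
theorem hitting_time_distribution
    {Ω : Type*} [MeasurableSpace Ω] (P : Measure Ω) [IsProbabilityMeasure P]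
    (k : ℕ) (hk : 1 ≤ k) (p q : ℝ) (hp0 : 0 < p) (hp1 : p < 1) (hq : q = 1 - p)
    (ξ : ℕ → Ω → ℤ) (hmeas : ∀ i, Measurable (ξ i))
    (hindep : iIndepFun ξ P)
    (hup : ∀ i, P {ω | ξ i ω = 1} = ENNReal.ofReal p)
    (hdown : ∀ i, P {ω | ξ i ω = -1} = ENNReal.ofReal q)
    (S : ℕ → Ω → ℤ) (hS : ∀ n ω, S n ω = (k : ℤ) + ∑ i ∈ Finset.range n, ξ i ω)
    (H : Ω → ℕ∞) (hH : ∀ ω, H ω = ⨅ (m : ℕ) (_ : S m ω = 0), (m : ℕ∞))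
    (n : ℕ) (hn : 1 ≤ n) :
    P {ω | H ω = (n : ℕ∞)} =
      if k ≤ n ∧ Even (n + k) then
        ENNReal.ofReal (((k : ℝ) / n) * (n.choose ((n + k) / 2)) *
          q ^ ((n + k) / 2) * p ^ ((n - k) / 2))
      else 0 :=
  hitting_time_distribution_general P k p q hp0 hp1 hq ξ hmeas hindep hup hdown S hS H hH n hn
end

section
/- Let k ≥ 1 be an integer and let 0 < μ < λ. Then ∫_0^∞ (μ/λ)^{k/2} e^{-(μ+λ)t} (k/t) I_k(2√(μλ) t) dt = (μ/λ)^k, which is strictly less than 1. -/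
/-!
Write `r = μ/λ`, `a = √(μλ)` and `s = μ + λ`. Expanding `I_k` and integrating term by term with
Euler's Gamma integral turns the integral into `r^{k/2} (a/s)^k ∑_ℓ c(k,ℓ) x^ℓ`, where
`x = (a/s)^2 = r/(1+r)^2` and `c(k,ℓ) = k (2ℓ+k-1)!/((ℓ+k)! ℓ!)` are the ballot numbers, the
coefficients of `C(x)^k` for the Catalan generating function `C`. At this `x`, `C(x) = 1 + r` is the
smaller root of `x y^2 - y + 1 = 0`, and `r^{1/2} (a/s) (1 + r) = r`.

The identity `∑_ℓ c(k,ℓ) x^ℓ = (1+r)^k` comes from the Pascal-type rule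
`c(k+1,ℓ+1) = c(k,ℓ+1) + c(k+2,ℓ)`: the error `∑_ℓ c(k,ℓ) x^ℓ - (1+r)^k` solves a linear recurrence
with characteristic roots `1 + r < (1+r)/r`, vanishes at `k = 0` and grows at most like
`2^k = o(((1+r)/r)^k)`, so it vanishes identically.
-/

open MeasureTheory

open Set Filter Topology
open scoped Nat

section LinearRecurrence

variable {u : ℕ → ℝ} {a b : ℝ}

lemma sub_mul_eq_of_linear_recurrence
    (hrec : ∀ k, u (k + 2) = (a + b) * u (k + 1) - a * b * u k) (h0 : u 0 = 0) (k : ℕ) :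
    (b - a) * u k = u 1 * (b ^ k - a ^ k) := by
  induction k using Nat.twoStepInduction with
  | zero => simp [h0]
  | one => ring
  | more k ih₀ ih₁ =>
    rw [hrec, pow_succ, pow_succ, pow_succ, pow_succ]
    linear_combination (a + b) * ih₁ - a * b * ih₀

lemma eq_zero_of_linear_recurrence {c C : ℝ}
    (hrec : ∀ k, u (k + 2) = (a + b) * u (k + 1) - a * b * u k) (h0 : u 0 = 0) (ha : 0 ≤ a)
    (hab : a < b) (hc : 0 ≤ c) (hcb : c < b) (hu : ∀ k, |u k| ≤ C * c ^ k) (k : ℕ) :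
    u k = 0 := by
  have hb : 0 < b := ha.trans_lt hab
  have hlim : Tendsto (fun k => (b - a) * u k / b ^ k) atTop (𝓝 (u 1)) := by
    have h := ((tendsto_pow_atTop_nhds_zero_of_lt_one (div_nonneg ha hb.le)
      ((div_lt_one hb).2 hab)).const_sub 1).const_mul (u 1)
    rw [sub_zero, mul_one] at h
    refine h.congr fun k => ?_
    rw [sub_mul_eq_of_linear_recurrence hrec h0, div_pow]
    field_simp
  have hlim0 : Tendsto (fun k => (b - a) * u k / b ^ k) atTop (𝓝 0) := by
    have hbound := (tendsto_pow_atTop_nhds_zero_of_lt_one (div_nonneg hc hb.le)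
      ((div_lt_one hb).2 hcb)).const_mul ((b - a) * C)
    rw [mul_zero] at hbound
    refine squeeze_zero_norm (fun k => ?_) hbound
    calc ‖(b - a) * u k / b ^ k‖ = (b - a) * |u k| / b ^ k := by
          rw [Real.norm_eq_abs, abs_div, abs_mul, abs_of_pos (sub_pos.2 hab),
            abs_of_pos (pow_pos hb k)]
      _ ≤ (b - a) * (C * c ^ k) / b ^ k := by
          gcongr
          exact hu k
      _ = (b - a) * C * (c / b) ^ k := by rw [div_pow]; ring
  have hu1 : u 1 = 0 := tendsto_nhds_unique hlim hlim0
  have := sub_mul_eq_of_linear_recurrence hrec h0 k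
  rw [hu1, zero_mul] at this
  exact (mul_eq_zero.1 this).resolve_left (sub_ne_zero.2 hab.ne')

end LinearRecurrence

noncomputable def ballotCoeff (k ℓ : ℕ) : ℝ := k * (2 * ℓ + k - 1)! / ((ℓ + k)! * ℓ !)

lemma ballotCoeff_nonneg (k ℓ : ℕ) : 0 ≤ ballotCoeff k ℓ := by
  unfold ballotCoeff; positivity

lemma ballotCoeff_zero_left (ℓ : ℕ) : ballotCoeff 0 ℓ = 0 := by simp [ballotCoeff]

lemma ballotCoeff_succ_zero (k : ℕ) : ballotCoeff (k + 1) 0 = 1 := by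
  simp [ballotCoeff, Nat.factorial_succ, Nat.factorial_ne_zero, Nat.cast_add_one_ne_zero]

lemma ballotCoeff_succ_succ (k ℓ : ℕ) :
    ballotCoeff (k + 1) (ℓ + 1) = ballotCoeff k (ℓ + 1) + ballotCoeff (k + 2) ℓ := by
  simp only [ballotCoeff, show 2 * (ℓ + 1) + (k + 1) - 1 = 2 * ℓ + k + 1 + 1 by omega,
    show 2 * (ℓ + 1) + k - 1 = 2 * ℓ + k + 1 by omega,
    show 2 * ℓ + (k + 2) - 1 = 2 * ℓ + k + 1 by omega,
    show ℓ + 1 + (k + 1) = ℓ + k + 1 + 1 by omega, show ℓ + 1 + k = ℓ + k + 1 by omega,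
    show ℓ + (k + 2) = ℓ + k + 1 + 1 by omega, Nat.factorial_succ]
  push_cast
  field_simp
  ring

lemma ballotCoeff_le_choose (k ℓ : ℕ) : ballotCoeff k ℓ ≤ (2 * ℓ + k).choose ℓ := by
  rcases Nat.eq_zero_or_pos k with rfl | hk
  · simp [ballotCoeff_zero_left]
  rw [Nat.cast_choose ℝ (by omega : ℓ ≤ 2 * ℓ + k), show 2 * ℓ + k - ℓ = ℓ + k by omega,
    ballotCoeff, mul_comm (ℓ ! : ℝ), ← Nat.mul_factorial_pred (by omega : 2 * ℓ + k ≠ 0)]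
  push_cast
  gcongr
  exact_mod_cast Nat.le_add_left k (2 * ℓ)

noncomputable def ballotSeries (k : ℕ) (x : ℝ) : ℝ := ∑' ℓ, ballotCoeff k ℓ * x ^ ℓ

section BallotSeries

variable {x : ℝ}

lemma ballotCoeff_mul_pow_le (hx : 0 ≤ x) (k ℓ : ℕ) :
    ballotCoeff k ℓ * x ^ ℓ ≤ 2 ^ k * (4 * x) ^ ℓ := by
  calc ballotCoeff k ℓ * x ^ ℓ ≤ 2 ^ (2 * ℓ + k) * x ^ ℓ := by
        gcongr
        exact (ballotCoeff_le_choose k ℓ).trans (mod_cast Nat.choose_le_two_pow _ _)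
    _ = 2 ^ k * (4 * x) ^ ℓ := by rw [pow_add, pow_mul, mul_pow]; norm_num; ring

lemma summable_ballotCoeff_mul_pow (hx0 : 0 ≤ x) (hx : 4 * x < 1) (k : ℕ) :
    Summable fun ℓ => ballotCoeff k ℓ * x ^ ℓ :=
  .of_nonneg_of_le (fun ℓ => by have := ballotCoeff_nonneg k ℓ; positivity)
    (ballotCoeff_mul_pow_le hx0 k) ((summable_geometric_of_lt_one (by positivity) hx).mul_left _)

lemma ballotSeries_nonneg (hx : 0 ≤ x) (k : ℕ) : 0 ≤ ballotSeries k x :=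
  tsum_nonneg fun ℓ => by have := ballotCoeff_nonneg k ℓ; positivity

lemma ballotSeries_le (hx0 : 0 ≤ x) (hx : 4 * x < 1) (k : ℕ) :
    ballotSeries k x ≤ 2 ^ k / (1 - 4 * x) := by
  have hgeom := summable_geometric_of_lt_one (by positivity) hx
  calc ballotSeries k x ≤ ∑' ℓ, 2 ^ k * (4 * x) ^ ℓ :=
        (summable_ballotCoeff_mul_pow hx0 hx k).tsum_le_tsum (ballotCoeff_mul_pow_le hx0 k)
          (hgeom.mul_left _)
    _ = 2 ^ k / (1 - 4 * x) := by
        rw [tsum_mul_left, tsum_geometric_of_lt_one (by positivity) hx, div_eq_mul_inv]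

lemma ballotSeries_succ (hx0 : 0 ≤ x) (hx : 4 * x < 1) (k : ℕ) :
    ballotSeries (k + 1) x + ballotCoeff k 0 =
      1 + ballotSeries k x + x * ballotSeries (k + 2) x := by
  have hs := summable_ballotCoeff_mul_pow hx0 hx
  have hshift : (fun ℓ => ballotCoeff (k + 1) (ℓ + 1) * x ^ (ℓ + 1)) =
      fun ℓ => ballotCoeff k (ℓ + 1) * x ^ (ℓ + 1) + x * (ballotCoeff (k + 2) ℓ * x ^ ℓ) := by
    funext ℓ; rw [ballotCoeff_succ_succ]; ring
  unfold ballotSeries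
  rw [(hs (k + 1)).tsum_eq_zero_add, (hs k).tsum_eq_zero_add, hshift,
    ((summable_nat_add_iff 1).mpr (hs k)).tsum_add ((hs (k + 2)).mul_left x), tsum_mul_left,
    ballotCoeff_succ_zero]
  ring

end BallotSeries

theorem ballotSeries_div_one_add_sq {r : ℝ} (hr0 : 0 < r) (hr1 : r < 1) {k : ℕ} (hk : k ≠ 0) :
    ballotSeries k (r / (1 + r) ^ 2) = (1 + r) ^ k := by
  set x := r / (1 + r) ^ 2 with hxr
  have hx0 : 0 ≤ x := by positivity
  have hx : 4 * x < 1 := by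
    rw [hxr, mul_div_assoc', div_lt_one (by positivity)]
    nlinarith [sq_pos_of_pos (sub_pos.2 hr1)]
  -- `ballotCoeff 0 0 = 0`, whereas `C(x) ^ 0 = 1`: the term `1 - ballotCoeff k 0` restores it.
  set u : ℕ → ℝ := fun k => ballotSeries k x + (1 - ballotCoeff k 0) - (1 + r) ^ k with hu
  have hu0 : u 0 = 0 := by simp [hu, ballotSeries, ballotCoeff_zero_left]
  have hrec (k : ℕ) :
      u (k + 2) = ((1 + r) + (1 + r) / r) * u (k + 1) - (1 + r) * ((1 + r) / r) * u k := by
    have h := ballotSeries_succ hx0 hx k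
    simp only [hu, ballotCoeff_succ_zero, hxr] at h ⊢
    field_simp at h ⊢
    linear_combination -h
  have hbound (k : ℕ) : |u k| ≤ (1 / (1 - 4 * x) + 1) * 2 ^ k := by
    have h4x : 0 < 1 - 4 * x := by linarith
    rcases k with _ | k
    · rw [hu0, abs_zero]
      exact mul_nonneg (add_nonneg (one_div_nonneg.2 h4x.le) zero_le_one)
        (pow_nonneg zero_le_two _)
    · have hF := ballotSeries_le hx0 hx (k + 1)
      have hF0 := ballotSeries_nonneg hx0 (k + 1)
      have hp : (1 + r) ^ (k + 1) ≤ 2 ^ (k + 1) := pow_le_pow_left₀ (by positivity) (by linarith) _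
      have hp0 : 0 ≤ (1 + r) ^ (k + 1) := by positivity
      have hC : (1 / (1 - 4 * x) + 1) * 2 ^ (k + 1) =
          2 ^ (k + 1) / (1 - 4 * x) + 2 ^ (k + 1) := by ring
      simp only [hu, ballotCoeff_succ_zero, sub_self, add_zero, hC]
      exact abs_le.2 ⟨by linarith, by linarith⟩
  obtain ⟨k, rfl⟩ : ∃ j, k = j + 1 := ⟨k - 1, by omega⟩
  have := eq_zero_of_linear_recurrence hrec hu0 (by positivity)
    (by rw [lt_div_iff₀ hr0]; nlinarith) zero_le_two (by rw [lt_div_iff₀ hr0]; linarith) hbound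
    (k + 1)
  simp only [hu, ballotCoeff_succ_zero] at this
  linarith

lemma integral_pow_mul_exp_neg_mul_Ioi (n : ℕ) {s : ℝ} (hs : 0 < s) :
    ∫ t in Ioi 0, t ^ n * Real.exp (-(s * t)) = n ! / s ^ (n + 1) := by
  have h := Real.integral_rpow_mul_exp_neg_mul_Ioi (a := n + 1) (by positivity) hs
  rw [add_sub_cancel_right, Real.Gamma_nat_eq_factorial, ← Nat.cast_add_one, Real.rpow_natCast,
    one_div, inv_pow, inv_mul_eq_div] at h
  simpa only [Real.rpow_natCast] using h

lemma integrableOn_pow_mul_exp_neg_mul_Ioi (n : ℕ) {s : ℝ} (hs : 0 < s) :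
    IntegrableOn (fun t => t ^ n * Real.exp (-(s * t))) (Ioi 0) := by
  refine (integrableOn_rpow_mul_exp_neg_mul_rpow (s := n) (p := 1)
    (by linarith [n.cast_nonneg (α := ℝ)]) one_pos hs).congr_fun (fun t _ => ?_) measurableSet_Ioi
  simp [Real.rpow_natCast]

lemma div_mul_besselI_eq_tsum {k : ℕ} (hk : k ≠ 0) (a : ℝ) {t : ℝ} (ht : t ≠ 0) :
    k / t * besselI k (2 * a * t) =
      ∑' ℓ : ℕ, k * a ^ (2 * ℓ + k) / ((ℓ + k)! * ℓ !) * t ^ (2 * ℓ + k - 1) := by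
  rw [besselI, ← tsum_mul_left]
  congr 1
  funext ℓ
  rw [show 2 * a * t / 2 = a * t by ring, mul_pow, ← pow_sub_one_mul (by omega : 2 * ℓ + k ≠ 0) t]
  field_simp

theorem integral_exp_mul_div_mul_besselI {k : ℕ} (hk : k ≠ 0) {a s : ℝ} (ha : 0 ≤ a)
    (has : 2 * a < s) :
    ∫ t in Ioi 0, Real.exp (-s * t) * (k / t) * besselI k (2 * a * t) =
      (a / s) ^ k * ballotSeries k ((a / s) ^ 2) := by
  have hs : 0 < s := by linarith
  have hs0 : s ≠ 0 := hs.ne'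
  have h4 : 4 * (a / s) ^ 2 < 1 := by
    rw [div_pow, mul_div_assoc', div_lt_one (by positivity)]
    nlinarith
  set F : ℕ → ℝ → ℝ := fun ℓ t =>
    k * a ^ (2 * ℓ + k) / ((ℓ + k)! * ℓ !) * (t ^ (2 * ℓ + k - 1) * Real.exp (-(s * t))) with hF
  have hF_int (ℓ : ℕ) : IntegrableOn (F ℓ) (Ioi 0) :=
    (integrableOn_pow_mul_exp_neg_mul_Ioi _ hs).const_mul _
  have hF_integral (ℓ : ℕ) :
      ∫ t in Ioi 0, F ℓ t = ballotCoeff k ℓ * (a / s) ^ (2 * ℓ + k) := by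
    rw [integral_const_mul, integral_pow_mul_exp_neg_mul_Ioi _ hs,
      Nat.sub_add_cancel (by omega : 1 ≤ 2 * ℓ + k), ballotCoeff, div_pow]
    ring
  have hterm (ℓ : ℕ) : ballotCoeff k ℓ * (a / s) ^ (2 * ℓ + k) =
      (a / s) ^ k * (ballotCoeff k ℓ * ((a / s) ^ 2) ^ ℓ) := by ring
  have hF_norm (ℓ : ℕ) : ∫ t in Ioi 0, ‖F ℓ t‖ = ∫ t in Ioi 0, F ℓ t :=
    setIntegral_congr_fun measurableSet_Ioi fun t (ht : 0 < t) =>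
      Real.norm_of_nonneg (mul_nonneg (by positivity) (by positivity))
  calc ∫ t in Ioi 0, Real.exp (-s * t) * (k / t) * besselI k (2 * a * t)
      = ∫ t in Ioi 0, ∑' ℓ, F ℓ t := by
        refine setIntegral_congr_fun measurableSet_Ioi fun t (ht : 0 < t) => ?_
        rw [mul_assoc, div_mul_besselI_eq_tsum hk a ht.ne', ← tsum_mul_left]
        congr 1
        funext ℓ
        simp only [hF, neg_mul]
        ring
    _ = ∑' ℓ, ∫ t in Ioi 0, F ℓ t := by
        refine (integral_tsum_of_summable_integral_norm hF_int ?_).symm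
        simp_rw [hF_norm, hF_integral, hterm]
        exact (summable_ballotCoeff_mul_pow (by positivity) h4 k).mul_left _
    _ = (a / s) ^ k * ballotSeries k ((a / s) ^ 2) := by
        simp_rw [hF_integral, hterm]
        rw [tsum_mul_left, ballotSeries]

/-- For an integer `k ≥ 1` and `0 < μ < λ`,
`∫_0^∞ (μ/λ)^(k/2) e^{-(μ+λ)t} (k/t) I_k(2√(μλ) t) dt = (μ/λ)^k < 1`. -/
theorem besselI_density_integral_lt_one
    (k : ℕ) (hk : 1 ≤ k) (lam mu : ℝ) (hmu : 0 < mu) (hmulam : mu < lam) :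
    (∫ t in Set.Ioi (0:ℝ),
        (mu / lam) ^ ((k : ℝ) / 2) * Real.exp (-(mu + lam) * t) * ((k : ℝ) / t) *
          besselI k (2 * Real.sqrt (mu * lam) * t)) = (mu / lam) ^ k ∧
      (mu / lam) ^ k < 1 := by
  have hlam : 0 < lam := hmu.trans hmulam
  set r := mu / lam with hr
  have hr0 : 0 < r := div_pos hmu hlam
  have hr1 : r < 1 := (div_lt_one hlam).2 hmulam
  refine ⟨?_, pow_lt_one₀ hr0.le hr1 (by omega)⟩
  set a := √(mu * lam) with ha
  have ha_sq : a ^ 2 = mu * lam := Real.sq_sqrt (by positivity)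
  have has : 2 * a < mu + lam := by nlinarith [Real.sqrt_nonneg (mu * lam)]
  have hsqrt_mul : √r * a = mu := by
    rw [ha, ← Real.sqrt_mul hr0.le, hr, show mu / lam * (mu * lam) = mu * mu by field_simp,
      Real.sqrt_mul_self hmu.le]
  have hs : mu + lam = lam * (1 + r) := by
    rw [hr, mul_add, mul_one, mul_div_cancel₀ _ hlam.ne', add_comm]
  have hsq : (a / (mu + lam)) ^ 2 = r / (1 + r) ^ 2 := by
    rw [div_pow, ha_sq, hs, hr]; field_simp
  have hrpow : r ^ ((k : ℝ) / 2) = √r ^ k := by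
    rw [Real.sqrt_eq_rpow, ← Real.rpow_natCast, ← Real.rpow_mul hr0.le]; ring_nf
  calc ∫ t in Ioi 0,
        r ^ ((k : ℝ) / 2) * Real.exp (-(mu + lam) * t) * (k / t) * besselI k (2 * a * t)
      = r ^ ((k : ℝ) / 2) *
          ∫ t in Ioi 0, Real.exp (-(mu + lam) * t) * (k / t) * besselI k (2 * a * t) := by
        rw [← integral_const_mul]
        simp only [mul_assoc]
    _ = r ^ k := by
        rw [integral_exp_mul_div_mul_besselI (by omega) (Real.sqrt_nonneg _) has, hsq,
          ballotSeries_div_one_add_sq hr0 hr1 (by omega), hrpow, ← mul_pow, ← mul_pow]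
        congr 1
        rw [hs]
        field_simp
        rw [← ha, hsqrt_mul, hr, mul_div_cancel₀ _ hlam.ne']
end
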